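/- Under the moving-frame hypotheses, the vector T⊥(t) is differentiable and its derivative satisfies T⊥'(t₀) = −⟨N'(t₀), T⊥(t₀)⟩ · N(t₀) + cot θ(t₀) · ⟨N'(t₀), T₀(t₀)⟩ · T₀(t₀) at every t₀ (equivalently, in the paper's notation, D_V T⊥ = II(V, T⊥) N − cot θ · II(V, T₀) T₀). -/

import Mathlib

open scoped InnerProductSpace
open Real

/-- Cross product on ℝ³ (Euclidean space). -/
noncomputable def cross3 (a b : EuclideanSpace ℝ (Fin 3)) : EuclideanSpace ℝ (Fin 3) :=
  (WithLp.equiv 2 (Fin 3 → ℝ)).symm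
    ![a 1 * b 2 - a 2 * b 1, a 2 * b 0 - a 0 * b 2, a 0 * b 1 - a 1 * b 0]

/-! By the BAC-CAB rule, `T⊥ = N × (N × h) / sin θ = (cos θ • N - h) / sin θ` with
`cos θ = ⟪N, h⟫` and `sin θ = √(1 - ⟪N, h⟫²)`, so `T⊥'` is computed by differentiating scalars
only. Since `N' ⊥ N` and `(T₀, T⊥)` is an orthonormal basis of `N^⊥`, the term
`⟪N', T₀⟫ • T₀` of the claimed formula equals `N' - ⟪N', T⊥⟫ • T⊥`, which turns the claim into
an identity between explicit combinations of `N`, `N'` and `h`. -/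

open Matrix

lemma cross3_eq_toLp_crossProduct (a b : EuclideanSpace ℝ (Fin 3)) :
    cross3 a b = WithLp.toLp 2 (a.ofLp ⨯₃ b.ofLp) := rfl

lemma real_inner_eq_dotProduct {ι : Type*} [Fintype ι] (x y : EuclideanSpace ℝ ι) :
    ⟪x, y⟫_ℝ = x.ofLp ⬝ᵥ y.ofLp := by
  rw [EuclideanSpace.inner_eq_star_dotProduct, star_trivial, dotProduct_comm]

lemma cross3_smul_right (r : ℝ) (a b : EuclideanSpace ℝ (Fin 3)) :
    cross3 a (r • b) = r • cross3 a b := by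
  simp [cross3_eq_toLp_crossProduct]

lemma cross3_anticomm (a b : EuclideanSpace ℝ (Fin 3)) : cross3 a b = -cross3 b a := by
  simp only [cross3_eq_toLp_crossProduct, ← cross_anticomm b.ofLp, WithLp.toLp_neg]

lemma cross3_cross3 (a b c : EuclideanSpace ℝ (Fin 3)) :
    cross3 a (cross3 b c) = ⟪a, c⟫_ℝ • b - ⟪b, a⟫_ℝ • c := by
  simp only [cross3_eq_toLp_crossProduct, real_inner_eq_dotProduct,
    cross_cross_eq_smul_sub_smul']
  rfl

lemma inner_cross3_cross3 (a b c d : EuclideanSpace ℝ (Fin 3)) :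
    ⟪cross3 a b, cross3 c d⟫_ℝ = ⟪a, c⟫_ℝ * ⟪b, d⟫_ℝ - ⟪a, d⟫_ℝ * ⟪b, c⟫_ℝ := by
  simp only [cross3_eq_toLp_crossProduct, real_inner_eq_dotProduct, cross_dot_cross]

section Frame

variable {u v : EuclideanSpace ℝ (Fin 3)} (hu : ‖u‖ = 1)
include hu

lemma cross3_cross3_of_norm_eq_one (w : EuclideanSpace ℝ (Fin 3)) :
    cross3 u (cross3 u w) = ⟪u, w⟫_ℝ • u - w := by
  rw [cross3_cross3, real_inner_self_eq_norm_sq, hu, one_pow, one_smul]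

lemma inner_cross3_self_of_norm_eq_one {w : EuclideanSpace ℝ (Fin 3)} (hw : ‖w‖ = 1) :
    ⟪cross3 u w, cross3 u w⟫_ℝ = 1 - ⟪u, w⟫_ℝ ^ 2 := by
  rw [inner_cross3_cross3, real_inner_self_eq_norm_sq, real_inner_self_eq_norm_sq, hu, hw,
    real_inner_comm w]
  ring

lemma inner_smul_cross3_add_inner_smul_cross3_cross3 (hv : ⟪v, u⟫_ℝ = 0)
    (w : EuclideanSpace ℝ (Fin 3)) :
    ⟪v, cross3 u w⟫_ℝ • cross3 u w + ⟪v, cross3 u (cross3 u w)⟫_ℝ • cross3 u (cross3 u w) =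
      ⟪cross3 u w, cross3 u w⟫_ℝ • v := by
  set X := cross3 u w
  have hvX : cross3 v X = ⟪v, w⟫_ℝ • u := by
    rw [cross3_cross3, inner_eq_zero_symm.1 hv, zero_smul, sub_zero]
  have hXvX : cross3 X (cross3 v X) = ⟪X, X⟫_ℝ • v - ⟪v, X⟫_ℝ • X := by
    rw [cross3_cross3, real_inner_comm]
  rw [hvX, cross3_smul_right, cross3_anticomm, cross3_cross3_of_norm_eq_one hu] at hXvX
  rw [cross3_cross3_of_norm_eq_one hu, inner_sub_right, real_inner_smul_right, hv]
  linear_combination (norm := module) hXvX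

lemma inner_smul_add_inner_smul_cross3_eq_self (hv : ⟪v, u⟫_ℝ = 0)
    {w : EuclideanSpace ℝ (Fin 3)} {s : ℝ} (hs : s ^ 2 = ⟪cross3 u w, cross3 u w⟫_ℝ)
    (hs0 : s ≠ 0) :
    ⟪v, s⁻¹ • cross3 u w⟫_ℝ • (s⁻¹ • cross3 u w) +
        ⟪v, cross3 u (s⁻¹ • cross3 u w)⟫_ℝ • cross3 u (s⁻¹ • cross3 u w) = v := by
  have hdec := inner_smul_cross3_add_inner_smul_cross3_cross3 hu hv w
  rw [← hs] at hdec
  rw [cross3_smul_right, real_inner_smul_right, real_inner_smul_right]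
  calc _ = (s ^ 2)⁻¹ • (⟪v, cross3 u w⟫_ℝ • cross3 u w +
        ⟪v, cross3 u (cross3 u w)⟫_ℝ • cross3 u (cross3 u w)) := by module
    _ = v := by rw [hdec, smul_smul, inv_mul_cancel₀ (pow_ne_zero 2 hs0), one_smul]

end Frame

lemma inner_eq_zero_of_hasDerivAt_of_norm_eq_one {E : Type*} [NormedAddCommGroup E]
    [InnerProductSpace ℝ E] {N : ℝ → E} {N' : E} {t : ℝ} (hN : HasDerivAt N N' t)
    (hNu : ∀ s, ‖N s‖ = 1) : ⟪N', N t⟫_ℝ = 0 := by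
  have hconst : (‖N ·‖ ^ 2) = fun _ => (1 : ℝ) := funext fun s => by simp [hNu s]
  have h2 := hN.norm_sq
  rw [hconst] at h2
  have := h2.unique (hasDerivAt_const t 1)
  rw [real_inner_comm]
  linarith

lemma sin_arccos_pos {x : ℝ} (hx : |x| < 1) : 0 < sin (arccos x) := by
  rw [Real.sin_arccos]
  exact Real.sqrt_pos.2 (by nlinarith [abs_nonneg x, sq_abs x])

lemma HasDerivAt.sin_arccos {f : ℝ → ℝ} {f' t : ℝ} (hf : HasDerivAt f f' t) (hft : |f t| < 1) :
    HasDerivAt (fun s => Real.sin (arccos (f s))) (-(f t * f') / Real.sin (arccos (f t))) t := by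
  have hpos : 0 < 1 - f t ^ 2 := by nlinarith [abs_nonneg (f t), sq_abs (f t)]
  simp only [Real.sin_arccos]
  refine ((Real.hasDerivAt_sqrt hpos.ne').comp t ((hf.pow 2).const_sub 1)).congr_deriv ?_
  field_simp
  ring

lemma hasDerivAt_inv_sin_arccos_inner_smul_sub {E : Type*} [NormedAddCommGroup E]
    [InnerProductSpace ℝ E] {N : ℝ → E} {N' h : E} {t : ℝ} (hN : HasDerivAt N N' t)
    (hNh : |⟪N t, h⟫_ℝ| < 1) :
    HasDerivAt (fun s => (sin (arccos ⟪N s, h⟫_ℝ))⁻¹ • (⟪N s, h⟫_ℝ • N s - h))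
      ((sin (arccos ⟪N t, h⟫_ℝ))⁻¹ • (⟪N t, h⟫_ℝ • N' + ⟪N', h⟫_ℝ • N t) +
        (⟪N t, h⟫_ℝ * ⟪N', h⟫_ℝ / sin (arccos ⟪N t, h⟫_ℝ) ^ 3) • (⟪N t, h⟫_ℝ • N t - h)) t := by
  have hc : HasDerivAt (fun s => ⟪N s, h⟫_ℝ) ⟪N', h⟫_ℝ t := by
    simpa using hN.inner ℝ (hasDerivAt_const t h)
  refine (((hc.sin_arccos hNh).inv (sin_arccos_pos hNh).ne').smul
    ((hc.smul hN).sub_const h)).congr_deriv ?_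
  congr 2
  field_simp

theorem deriv_Tperp_eq_general
    (h : EuclideanSpace ℝ (Fin 3)) (hh : ‖h‖ = 1)
    (N : ℝ → EuclideanSpace ℝ (Fin 3)) (hND : Differentiable ℝ N)
    (hNu : ∀ t, ‖N t‖ = 1) (hNh : ∀ t, |⟪N t, h⟫_ℝ| < 1)
    (θ : ℝ → ℝ) (hθ : ∀ t, θ t = Real.arccos ⟪N t, h⟫_ℝ)
    (T₀ : ℝ → EuclideanSpace ℝ (Fin 3))
    (hT₀ : ∀ t, T₀ t = (Real.sin (θ t))⁻¹ • cross3 (N t) h)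
    (Tperp : ℝ → EuclideanSpace ℝ (Fin 3))
    (hTp : ∀ t, Tperp t = cross3 (N t) (T₀ t)) :
    Differentiable ℝ Tperp ∧
    ∀ t₀, deriv Tperp t₀ =
      -⟪deriv N t₀, Tperp t₀⟫_ℝ • N t₀ +
        ((Real.cos (θ t₀) / Real.sin (θ t₀)) * ⟪deriv N t₀, T₀ t₀⟫_ℝ) • T₀ t₀ := by
  simp only [hθ] at hT₀ ⊢
  have hN (t) : HasDerivAt N (deriv N t) t := (hND t).hasDerivAt
  have hTp_eq : Tperp = fun t => (sin (arccos ⟪N t, h⟫_ℝ))⁻¹ • (⟪N t, h⟫_ℝ • N t - h) :=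
    funext fun t => by rw [hTp, hT₀, cross3_smul_right, cross3_cross3_of_norm_eq_one (hNu t)]
  have hder (t) := hTp_eq ▸ hasDerivAt_inv_sin_arccos_inner_smul_sub (hN t) (hNh t)
  refine ⟨fun t => (hder t).differentiableAt, fun t => ?_⟩
  have hs0 := (sin_arccos_pos (hNh t)).ne'
  have hcos := cos_arccos (abs_lt.1 (hNh t)).1.le (abs_lt.1 (hNh t)).2.le
  have hs2 : sin (arccos ⟪N t, h⟫_ℝ) ^ 2 = ⟪cross3 (N t) h, cross3 (N t) h⟫_ℝ := by
    rw [sin_sq, hcos, inner_cross3_self_of_norm_eq_one (hNu t) hh]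
  have hvN := inner_eq_zero_of_hasDerivAt_of_norm_eq_one (hN t) hNu
  have hframe : ⟪deriv N t, T₀ t⟫_ℝ • T₀ t + ⟪deriv N t, Tperp t⟫_ℝ • Tperp t = deriv N t := by
    rw [hTp, hT₀]
    exact inner_smul_add_inner_smul_cross3_eq_self (hNu t) hvN hs2 hs0
  have hTpt : Tperp t = _ := congrFun hTp_eq t
  have hvTp : ⟪deriv N t, Tperp t⟫_ℝ = -⟪deriv N t, h⟫_ℝ / sin (arccos ⟪N t, h⟫_ℝ) := by
    rw [hTpt, real_inner_smul_right, inner_sub_right, real_inner_smul_right, hvN]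
    ring
  rw [(hder t).deriv, mul_smul, eq_sub_of_add_eq hframe, hvTp, hTpt, hcos]
  match_scalars <;> field_simp

/-- the vector Tperp(t) is differentiable with
Tperp'(t₀) = −⟨N'(t₀), Tperp(t₀)⟩ · N(t₀) + cot θ(t₀) · ⟨N'(t₀), T₀(t₀)⟩ · T₀(t₀)
(i.e., D_V Tperp = II(V, Tperp) N − cot θ · II(V, T₀) T₀). -/
theorem deriv_Tperp_eq
    (h : EuclideanSpace ℝ (Fin 3)) (hh : ‖h‖ = 1)
    (N : ℝ → EuclideanSpace ℝ (Fin 3)) (hND : Differentiable ℝ N)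
    (hNu : ∀ t, ‖N t‖ = 1) (hNh : ∀ t, |⟪N t, h⟫_ℝ| < 1)
    (θ : ℝ → ℝ) (hθ : ∀ t, θ t = Real.arccos ⟪N t, h⟫_ℝ)
    (T₀ : ℝ → EuclideanSpace ℝ (Fin 3))
    (hT₀ : ∀ t, T₀ t = (Real.sin (θ t))⁻¹ • cross3 (N t) h)
    (Tperp : ℝ → EuclideanSpace ℝ (Fin 3))
    (hTp : ∀ t, Tperp t = cross3 (N t) (T₀ t))
    (n : ℝ → EuclideanSpace ℝ (Fin 3))
    (hn : ∀ t, n t = (Real.sin (θ t))⁻¹ • (N t - Real.cos (θ t) • h)) :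
    Differentiable ℝ Tperp ∧
    ∀ t₀, deriv Tperp t₀ =
      -⟪deriv N t₀, Tperp t₀⟫_ℝ • N t₀ +
        ((Real.cos (θ t₀) / Real.sin (θ t₀)) * ⟪deriv N t₀, T₀ t₀⟫_ℝ) • T₀ t₀ :=
  deriv_Tperp_eq_general h hh N hND hNu hNh θ hθ T₀ hT₀ Tperp hTp
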